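/- arXiv:2204.00782 — 7 statements merged into one kernel-verified Lean document; each statement's English description precedes it below -/
import Mathlib

section
/- Let V be a normed space with norm p, and U ⊆ V a convex, approximatively compact subset. Then the best approximation map Pr : V → 2^U defined by Pr(v) = {ū ∈ U : p(v - ū) = inf_{u ∈ U} p(v - u)} is upper semicontinuous with nonempty, compact, and convex values. -/
open Filter Topology Set

/-- The best approximation map onto a nonempty convex approximatively compact subset of
a normed space is upper semicontinuous with nonempty, compact, convex values. -/
theorem stmt3 {V : Type*} [NormedAddCommGroup V] [NormedSpace ℝ V]
    (U : Set V) (hUne : U.Nonempty) (hUcv : Convex ℝ U)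
    (hAC : ∀ v : V, ∀ u : ℕ → V, (∀ n, u n ∈ U) →
      Tendsto (fun n => ‖v - u n‖) atTop (𝓝 (⨅ w : U, ‖v - (w : V)‖)) →
      ∃ φ : ℕ → ℕ, StrictMono φ ∧ ∃ l ∈ U, Tendsto (u ∘ φ) atTop (𝓝 l)) :
    (∀ v : V, ∀ W : Set V, IsOpen W →
      {x ∈ U | ‖v - x‖ = ⨅ w : U, ‖v - (w : V)‖} ⊆ W →
      ∀ᶠ v' in 𝓝 v, {x ∈ U | ‖v' - x‖ = ⨅ w : U, ‖v' - (w : V)‖} ⊆ W) ∧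
    ∀ v : V,
      ({x ∈ U | ‖v - x‖ = ⨅ w : U, ‖v - (w : V)‖}).Nonempty ∧
      IsCompact {x ∈ U | ‖v - x‖ = ⨅ w : U, ‖v - (w : V)‖} ∧
      Convex ℝ {x ∈ U | ‖v - x‖ = ⨅ w : U, ‖v - (w : V)‖} := by
  haveI : Nonempty U := hUne.to_subtype
  -- identify the infimum with infDist
  have hd : ∀ v : V, (⨅ w : U, ‖v - (w : V)‖) = Metric.infDist v U := by
    intro v
    rw [Metric.infDist_eq_iInf]
    exact iInf_congr fun w => (dist_eq_norm v w).symm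
  have hdle : ∀ v : V, ∀ x ∈ U, (⨅ w : U, ‖v - (w : V)‖) ≤ ‖v - x‖ := by
    intro v x hx
    rw [hd, ← dist_eq_norm]
    exact Metric.infDist_le_dist_of_mem hx
  -- key: any sequence in U whose distances to v tend to the inf has a limit point
  -- realizing the inf
  have key : ∀ v : V, ∀ u : ℕ → V, (∀ n, u n ∈ U) →
      Tendsto (fun n => ‖v - u n‖) atTop (𝓝 (⨅ w : U, ‖v - (w : V)‖)) →
      ∃ l ∈ {x ∈ U | ‖v - x‖ = ⨅ w : U, ‖v - (w : V)‖},
        ∃ φ : ℕ → ℕ, StrictMono φ ∧ Tendsto (u ∘ φ) atTop (𝓝 l) := by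
    intro v u hu htend
    obtain ⟨φ, hφ, l, hlU, hlt⟩ := hAC v u hu htend
    refine ⟨l, ⟨hlU, ?_⟩, φ, hφ, hlt⟩
    have h1 : Tendsto (fun n => ‖v - u (φ n)‖) atTop (𝓝 ‖v - l‖) :=
      (continuous_const.sub continuous_id).norm.continuousAt.tendsto.comp hlt
    have h2 : Tendsto (fun n => ‖v - u (φ n)‖) atTop (𝓝 (⨅ w : U, ‖v - (w : V)‖)) :=
      htend.comp hφ.tendsto_atTop
    exact tendsto_nhds_unique h1 h2
  -- nonempty values
  have hne : ∀ v : V, ({x ∈ U | ‖v - x‖ = ⨅ w : U, ‖v - (w : V)‖}).Nonempty := by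
    intro v
    have hseq : ∀ n : ℕ, ∃ x ∈ U, ‖v - x‖ < (⨅ w : U, ‖v - (w : V)‖) + 1 / (n + 1) := by
      intro n
      have : Metric.infDist v U < Metric.infDist v U + 1 / (n + 1) := by
        have : (0:ℝ) < 1 / (n + 1) := by positivity
        linarith
      obtain ⟨x, hxU, hx⟩ := (Metric.infDist_lt_iff hUne).mp this
      exact ⟨x, hxU, by rw [hd, ← dist_eq_norm]; exact hx⟩
    choose u hu hlt using hseq
    have htend : Tendsto (fun n => ‖v - u n‖) atTop (𝓝 (⨅ w : U, ‖v - (w : V)‖)) := by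
      have hup : Tendsto (fun n : ℕ => (⨅ w : U, ‖v - (w : V)‖) + 1 / (n + 1)) atTop
          (𝓝 ((⨅ w : U, ‖v - (w : V)‖) + 0)) :=
        tendsto_const_nhds.add tendsto_one_div_add_atTop_nhds_zero_nat
      rw [add_zero] at hup
      exact tendsto_of_tendsto_of_tendsto_of_le_of_le tendsto_const_nhds hup
        (fun n => hdle v (u n) (hu n)) (fun n => (hlt n).le)
    obtain ⟨l, hl, _⟩ := key v u hu htend
    exact ⟨l, hl⟩
  refine ⟨?_, fun v => ⟨hne v, ?_, ?_⟩⟩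
  · -- upper semicontinuity
    intro v W hW hsub
    by_contra hcon
    rw [Filter.not_eventually] at hcon
    -- extract a sequence v_n → v with bad points x_n
    have hseq : ∀ n : ℕ, ∃ v', dist v' v < 1 / (n + 1) ∧
        ∃ x, (x ∈ U ∧ ‖v' - x‖ = ⨅ w : U, ‖v' - (w : V)‖) ∧ x ∉ W := by
      intro n
      have hball : Metric.ball v (1 / (n + 1)) ∈ 𝓝 v :=
        Metric.ball_mem_nhds v (by positivity)
      obtain ⟨v', hv'ball, hv'⟩ := (hcon.and_eventually hball).exists
      rw [Set.not_subset] at hv'ball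
      obtain ⟨x, hx, hxW⟩ := hv'ball
      exact ⟨v', hv', x, hx, hxW⟩
    choose vs hvs x hx hxW using hseq
    have hvst : Tendsto vs atTop (𝓝 v) := by
      rw [tendsto_iff_dist_tendsto_zero]
      exact squeeze_zero (fun n => dist_nonneg) (fun n => (hvs n).le)
        tendsto_one_div_add_atTop_nhds_zero_nat
    have hdc : Tendsto (fun n => Metric.infDist (vs n) U) atTop (𝓝 (Metric.infDist v U)) :=
      ((Metric.continuous_infDist_pt U).continuousAt.tendsto).comp hvst
    have htend : Tendsto (fun n => ‖v - x n‖) atTop (𝓝 (⨅ w : U, ‖v - (w : V)‖)) := by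
      have hub : ∀ n, ‖v - x n‖ ≤ dist v (vs n) + Metric.infDist (vs n) U := by
        intro n
        calc ‖v - x n‖ = dist v (x n) := (dist_eq_norm _ _).symm
          _ ≤ dist v (vs n) + dist (vs n) (x n) := dist_triangle _ _ _
          _ = dist v (vs n) + Metric.infDist (vs n) U := by
              rw [dist_eq_norm (vs n), (hx n).2, hd]
      have hup : Tendsto (fun n => dist v (vs n) + Metric.infDist (vs n) U) atTop
          (𝓝 (0 + Metric.infDist v U)) := by
        refine Tendsto.add ?_ hdc
        have := (tendsto_iff_dist_tendsto_zero.mp hvst)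
        simpa [dist_comm] using this
      rw [zero_add, ← hd v] at hup
      exact tendsto_of_tendsto_of_tendsto_of_le_of_le tendsto_const_nhds hup
        (fun n => hdle v (x n) (hx n).1) hub
    obtain ⟨l, hl, φ, hφ, hlt⟩ := key v x (fun n => (hx n).1) htend
    have hlW : l ∈ W := hsub hl
    have := hlt.eventually (hW.mem_nhds hlW)
    obtain ⟨n, hn⟩ := this.exists
    exact hxW (φ n) hn
  · -- compactness
    refine IsSeqCompact.isCompact ?_
    intro x hxmem
    have hu : ∀ n, x n ∈ U := fun n => (hxmem n).1
    have htend : Tendsto (fun n => ‖v - x n‖) atTop (𝓝 (⨅ w : U, ‖v - (w : V)‖)) := by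
      have : (fun n => ‖v - x n‖) = fun _ => (⨅ w : U, ‖v - (w : V)‖) :=
        funext fun n => (hxmem n).2
      rw [this]; exact tendsto_const_nhds
    obtain ⟨l, hl, φ, hφ, hlt⟩ := key v x hu htend
    exact ⟨l, hl, φ, hφ, hlt⟩
  · -- convexity
    intro p hp q hq a b ha hb hab
    have hz : a • p + b • q ∈ U := hUcv hp.1 hq.1 ha hb hab
    refine ⟨hz, le_antisymm ?_ (hdle v _ hz)⟩
    have : v - (a • p + b • q) = a • (v - p) + b • (v - q) := by
      have : v = a • v + b • v := by rw [← add_smul, hab, one_smul]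
      rw [smul_sub, smul_sub]
      nth_rewrite 1 [this]
      abel
    rw [this]
    calc ‖a • (v - p) + b • (v - q)‖ ≤ ‖a • (v - p)‖ + ‖b • (v - q)‖ := norm_add_le _ _
      _ = a * ‖v - p‖ + b * ‖v - q‖ := by
          rw [norm_smul, norm_smul, Real.norm_of_nonneg ha, Real.norm_of_nonneg hb]
      _ = (⨅ w : U, ‖v - (w : V)‖) := by rw [hp.2, hq.2, ← add_mul, hab, one_mul]
end

section
/- Let U and V be topological spaces, K : U → 2^V an upper semicontinuous set-valued map with nonempty compact values, and f : U × V → ℝ an upper semicontinuous function that is feasible path transfer lower semicontinuous in u with respect to K. Then the maximizing map M(u) = {v ∈ K(u) : f(u,v) ≥ f(u,w) for all w ∈ K(u)} is upper semicontinuous with nonempty compact values. -/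
/-!
Let `W` be an open set containing the maximizers of `f u` on `K u`, and `m` the maximum. On the
compact set `K u \ W` the upper semicontinuous function `f u` stays below some `r < m`, and by
the tube lemma `f u' < r` on a neighbourhood `B` of `K u \ W` for all `u'` near `u`. Feasible
path transfer lower semicontinuity provides, for `u'` near `u`, a feasible `v' ∈ K u'` with
`f u' v' > r`, so no maximizer of `f u'` on `K u' ⊆ W ∪ B` lies in `B`.
-/

open Filter Topology Set

section

variable {U V : Type*} [TopologicalSpace U] [TopologicalSpace V]

def maximizers {β : Type*} [LE β] (g : V → β) (s : Set V) : Set V :=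
  {v ∈ s | ∀ w ∈ s, g w ≤ g v}

def FeasiblePathTransferLSC (f : U → V → ℝ) (K : U → Set V) : Prop :=
  ∀ u, ∀ v ∈ K u, ∀ ε : ℝ, 0 < ε →
    ∀ᶠ u' in 𝓝 u, ∃ v' ∈ K u', f u v < f u' v' + ε

section LinearOrder

variable {β : Type*} [LinearOrder β]

theorem maximizers_nonempty {g : V → β} {s : Set V} (hs : IsCompact s) (hne : s.Nonempty)
    (hg : UpperSemicontinuousOn g s) : (maximizers g s).Nonempty :=
  let ⟨v, hv, hmax⟩ := hg.exists_isMaxOn hne hs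
  ⟨v, hv, isMaxOn_iff.1 hmax⟩

theorem IsCompact.isCompact_maximizers {g : V → β} {s : Set V} (hs : IsCompact s)
    (hg : UpperSemicontinuous g) : IsCompact (maximizers g s) := by
  have h : maximizers g s = s ∩ ⋂ w ∈ s, g ⁻¹' Ici (g w) := by
    ext v
    simp [maximizers]
  rw [h]
  exact hs.inter_right (isClosed_biInter fun w _ => hg.isClosed_preimage (g w))

theorem IsCompact.exists_lt_forall_lt [DenselyOrdered β] [NoMinOrder β] {g : V → β}
    {s : Set V} {m : β} (hs : IsCompact s) (hg : UpperSemicontinuousOn g s)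
    (h : ∀ v ∈ s, g v < m) : ∃ r < m, ∀ v ∈ s, g v < r := by
  rcases s.eq_empty_or_nonempty with rfl | hne
  · obtain ⟨r, hr⟩ := exists_lt m
    exact ⟨r, hr, by simp⟩
  obtain ⟨v₀, hv₀, hmax⟩ := hg.exists_isMaxOn hne hs
  obtain ⟨r, hv₀r, hrm⟩ := exists_between (h v₀ hv₀)
  exact ⟨r, hrm, fun v hv => (isMaxOn_iff.1 hmax v hv).trans_lt hv₀r⟩

theorem UpperSemicontinuous.exists_isOpen_eventually_forall_lt {f : U → V → β}
    (hf : UpperSemicontinuous fun p : U × V => f p.1 p.2) {u : U} {C : Set V} (hC : IsCompact C)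
    {r : β} (h : ∀ v ∈ C, f u v < r) :
    ∃ B, IsOpen B ∧ C ⊆ B ∧ ∀ᶠ u' in 𝓝 u, ∀ v ∈ B, f u' v < r := by
  obtain ⟨A, B, hA, hB, huA, hCB, hAB⟩ :=
    generalized_tube_lemma isCompact_singleton hC (hf.isOpen_preimage r)
      (by rintro ⟨_, v⟩ ⟨rfl, hv⟩; exact h v hv)
  exact ⟨B, hB, hCB, Filter.mem_of_superset (hA.mem_nhds (huA rfl))
    fun u' hu' v hv => hAB (mk_mem_prod hu' hv)⟩

theorem UpperSemicontinuous.curry_apply {f : U → V → β}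
    (hf : UpperSemicontinuous fun p : U × V => f p.1 p.2) (u : U) : UpperSemicontinuous (f u) :=
  hf.comp (Continuous.prodMk_right u)

end LinearOrder

theorem upperHemicontinuous_maximizers {K : U → Set V} {f : U → V → ℝ}
    (hK : UpperHemicontinuous K) (hKne : ∀ u, (K u).Nonempty) (hKcpt : ∀ u, IsCompact (K u))
    (hf : UpperSemicontinuous fun p : U × V => f p.1 p.2) (hFPT : FeasiblePathTransferLSC f K) :
    UpperHemicontinuous fun u => maximizers (f u) (K u) := by
  refine .of_forall_isOpen fun u W hW hMW => ?_
  have hfu := (hf.curry_apply u).upperSemicontinuousOn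
  have hC : IsCompact (K u \ W) := (hKcpt u).diff hW
  obtain ⟨v, hvK, hvmax⟩ := maximizers_nonempty (hKcpt u) (hKne u) (hfu _)
  have hlt : ∀ c ∈ K u \ W, f u c < f u v := fun c hc =>
    (hvmax c hc.1).lt_of_ne fun h => hc.2 (hMW ⟨hc.1, fun w hw => h ▸ hvmax w hw⟩)
  obtain ⟨r, hrv, hr⟩ := hC.exists_lt_forall_lt (hfu _) hlt
  obtain ⟨B, hB, hCB, hBr⟩ := hf.exists_isOpen_eventually_forall_lt hC hr
  have hKWB : ∀ᶠ u' in 𝓝 u, K u' ⊆ W ∪ B :=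
    hK.forall_isOpen u _ (hW.union hB) fun c hc =>
      or_iff_not_imp_left.2 fun hcW => hCB ⟨hc, hcW⟩
  filter_upwards [hFPT u v hvK _ (sub_pos.2 hrv), hBr, hKWB] with u' ⟨v', hv'K, hv'⟩ hBu' hKu'
  rintro w ⟨hwK, hwmax⟩
  refine (hKu' hwK).resolve_right fun hwB => ?_
  linarith [hBu' w hwB, hwmax v' hv'K]

end

/-- Generalized Berge maximum theorem of Tian and Zhou: if `K` is u.s.c. with nonempty
compact values and `f` is u.s.c. and feasible path transfer l.s.c. in `u` w.r.t. `K`,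
then the maximizing map is u.s.c. with nonempty compact values. -/
theorem stmt4 {U V : Type*} [TopologicalSpace U] [TopologicalSpace V]
    (K : U → Set V)
    (hKusc : ∀ u : U, ∀ W : Set V, IsOpen W → K u ⊆ W → ∀ᶠ u' in 𝓝 u, K u' ⊆ W)
    (hKne : ∀ u, (K u).Nonempty) (hKcpt : ∀ u, IsCompact (K u))
    (f : U → V → ℝ)
    (hfusc : UpperSemicontinuous (fun p : U × V => f p.1 p.2))
    (hFPT : ∀ u : U, ∀ v ∈ K u, ∀ ε : ℝ, 0 < ε →
      ∀ᶠ u' in 𝓝 u, ∃ v' ∈ K u', f u v < f u' v' + ε) :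
    (∀ u : U, ∀ W : Set V, IsOpen W →
      {v ∈ K u | ∀ w ∈ K u, f u w ≤ f u v} ⊆ W →
      ∀ᶠ u' in 𝓝 u, {v ∈ K u' | ∀ w ∈ K u', f u' w ≤ f u' v} ⊆ W) ∧
    ∀ u : U, ({v ∈ K u | ∀ w ∈ K u, f u w ≤ f u v}).Nonempty ∧
      IsCompact {v ∈ K u | ∀ w ∈ K u, f u w ≤ f u v} := by
  have hM := upperHemicontinuous_maximizers (.of_forall_isOpen hKusc) hKne hKcpt hfusc hFPT
  refine ⟨hM.forall_isOpen, fun u => ⟨?_, ?_⟩⟩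
  · exact maximizers_nonempty (hKcpt u) (hKne u) ((hfusc.curry_apply u).upperSemicontinuousOn _)
  · exact (hKcpt u).isCompact_maximizers (hfusc.curry_apply u)
end

section
/- If U, V are topological spaces, K : U → 2^V is a lower semicontinuous set-valued map with nonempty values, and f : U × V → ℝ is lower semicontinuous, then f is feasible path transfer lower semicontinuous in u with respect to K. -/
open Filter Topology Set

/-- If `K` is lower semicontinuous with nonempty values and `f` is lower semicontinuous,
then `f` is feasible path transfer lower semicontinuous in `u` with respect to `K`. -/
theorem stmt5 {U V : Type*} [TopologicalSpace U] [TopologicalSpace V]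
    (K : U → Set V)
    (hKlsc : ∀ u : U, ∀ W : Set V, IsOpen W → (K u ∩ W).Nonempty →
      ∀ᶠ u' in 𝓝 u, (K u' ∩ W).Nonempty)
    (hKne : ∀ u, (K u).Nonempty)
    (f : U → V → ℝ)
    (hflsc : LowerSemicontinuous (fun p : U × V => f p.1 p.2)) :
    ∀ u : U, ∀ v ∈ K u, ∀ ε : ℝ, 0 < ε →
      ∀ᶠ u' in 𝓝 u, ∃ v' ∈ K u', f u v < f u' v' + ε := by
  intro u v hv ε hε
  have h1 : ∀ᶠ p : U × V in 𝓝 (u, v), f u v - ε < f p.1 p.2 :=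
    hflsc (u, v) (f u v - ε) (by linarith)
  rw [nhds_prod_eq, Filter.eventually_prod_iff] at h1
  obtain ⟨pa, hpa, pb, hpb, h⟩ := h1
  obtain ⟨W, hWsub, hWopen, hvW⟩ := mem_nhds_iff.mp hpb
  have h2 := hKlsc u W hWopen ⟨v, hv, hvW⟩
  filter_upwards [h2, hpa] with u' hu'ne hu'a
  obtain ⟨v', hv'K, hv'W⟩ := hu'ne
  exact ⟨v', hv'K, by have := h hu'a (hWsub hv'W); linarith⟩
end

section
/- Define f : [0,1] × ℝ → ℝ by f(u,v) = 1 if v = u and 0 otherwise, and K : [0,1] → 2^ℝ by K(0) = ℝ and K(u) = {u} for u ≠ 0. Then f is not lower semicontinuous at (0,0), K is not lower semicontinuous at 0, but f is feasible path transfer lower semicontinuous in u with respect to K at every u ∈ [0,1]. -/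
open Filter Topology Set

/-- Counterexample: `f` is not l.s.c. at `(0,0)` and `K` is not l.s.c. at `0`, yet `f` is
feasible path transfer lower semicontinuous in `u` with respect to `K` everywhere. -/
theorem stmt6
    (f : ↥(Set.Icc (0:ℝ) 1) → ℝ → ℝ)
    (hf : ∀ u v, f u v = if v = (u : ℝ) then 1 else 0)
    (K : ↥(Set.Icc (0:ℝ) 1) → Set ℝ)
    (hK : ∀ u, K u = if (u : ℝ) = 0 then Set.univ else {(u : ℝ)}) :
    ¬ LowerSemicontinuousAt (fun p : ↥(Set.Icc (0:ℝ) 1) × ℝ => f p.1 p.2)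
        (⟨0, by norm_num⟩, 0) ∧
    ¬ (∀ W : Set ℝ, IsOpen W → (K ⟨0, by norm_num⟩ ∩ W).Nonempty →
        ∀ᶠ u' in 𝓝 (⟨0, by norm_num⟩ : ↥(Set.Icc (0:ℝ) 1)), (K u' ∩ W).Nonempty) ∧
    ∀ u, ∀ v ∈ K u, ∀ ε : ℝ, 0 < ε →
      ∀ᶠ u' in 𝓝 u, ∃ v' ∈ K u', f u v < f u' v' + ε := by
  have h01 : (0:ℝ) ≤ 1 := by norm_num
  set p0 : ↥(Set.Icc (0:ℝ) 1) := ⟨0, by norm_num⟩ with hp0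
  have hproj0 : Set.projIcc (0:ℝ) 1 h01 0 = p0 := by
    simp [Set.projIcc, p0, Subtype.ext_iff]
  have htend : Tendsto (fun t : ℝ => Set.projIcc (0:ℝ) 1 h01 t) (𝓝[>] 0) (𝓝 p0) := by
    have h1 : Continuous (Set.projIcc (0:ℝ) 1 h01) := continuous_projIcc
    have h2 : Tendsto (fun t : ℝ => Set.projIcc (0:ℝ) 1 h01 t) (𝓝[>] 0)
        (𝓝 (Set.projIcc (0:ℝ) 1 h01 0)) := (h1.tendsto 0).mono_left nhdsWithin_le_nhds
    rwa [hproj0] at h2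
  refine ⟨?_, ?_, ?_⟩
  · intro h
    have hev := h (1/2) (by simp only [hf]; norm_num)
    have htend2 : Tendsto (fun t : ℝ => (Set.projIcc (0:ℝ) 1 h01 t, (0:ℝ)))
        (𝓝[>] 0) (𝓝 (p0, 0)) := htend.prodMk_nhds tendsto_const_nhds
    have hev2 := htend2.eventually hev
    have hmem : ∀ᶠ t : ℝ in 𝓝[>] 0, t ∈ Set.Ioo (0:ℝ) 1 :=
      Ioo_mem_nhdsGT_of_mem (by constructor <;> norm_num)
    obtain ⟨t, ht1, ht2⟩ := (hev2.and hmem).exists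
    have hco : ((Set.projIcc (0:ℝ) 1 h01 t : ↥(Set.Icc (0:ℝ) 1)) : ℝ) = t := by
      rw [Set.projIcc_of_mem h01 (Set.mem_Icc_of_Ioo ht2)]
    simp only [hf, hco] at ht1
    rw [if_neg (by linarith [ht2.1])] at ht1
    linarith
  · intro h
    have h0 : (K p0 ∩ Set.Iio 0).Nonempty := by
      rw [hK]
      simp only [p0, if_pos rfl, Set.univ_inter]
      exact ⟨-1, by norm_num⟩
    have hev := h (Set.Iio 0) isOpen_Iio h0
    have hev2 := htend.eventually hev
    have hmem : ∀ᶠ t : ℝ in 𝓝[>] 0, t ∈ Set.Ioo (0:ℝ) 1 :=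
      Ioo_mem_nhdsGT_of_mem (by constructor <;> norm_num)
    obtain ⟨t, ht1, ht2⟩ := (hev2.and hmem).exists
    have hco : ((Set.projIcc (0:ℝ) 1 h01 t : ↥(Set.Icc (0:ℝ) 1)) : ℝ) = t := by
      rw [Set.projIcc_of_mem h01 (Set.mem_Icc_of_Ioo ht2)]
    rw [hK, hco, if_neg (by linarith [ht2.1])] at ht1
    obtain ⟨x, hx1, hx2⟩ := ht1
    rw [Set.mem_singleton_iff] at hx1
    subst hx1
    exact absurd hx2 (by simp; linarith [ht2.1])
  · intro u v hv ε hε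
    refine Filter.Eventually.of_forall fun u' => ⟨(u' : ℝ), ?_, ?_⟩
    · rw [hK]
      split
      · exact Set.mem_univ _
      · exact Set.mem_singleton _
    · have h1 : f u' (u' : ℝ) = 1 := by rw [hf]; simp
      have h2 : f u v ≤ 1 := by rw [hf]; split <;> norm_num
      rw [h1]; linarith
end

section
/- Consider a GNEP with finitely many players where F_i(X_{-i}) ⊆ X_i for every i (the product constraint map is a self-map). Then every best approximate solution x̃ of the GNEP is a generalized Nash equilibrium: x̃_i ∈ F_i(x̃_{-i}) and u_i(x̃_{-i}, x̃_i) ≥ u_i(x̃_{-i}, z_i) for all z_i ∈ F_i(x̃_{-i}) and all i. -/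
open Set

/-- If the constraint map is a self-map, every best approximate solution of the GNEP is a
generalized Nash equilibrium. -/
theorem stmt10 {ι : Type*} [Fintype ι] [DecidableEq ι]
    {Y : ι → Type*} [∀ i, NormedAddCommGroup (Y i)] [∀ i, NormedSpace ℝ (Y i)]
    (X : ∀ i, Set (Y i))
    (F : ∀ i, (∀ j, Y j) → Set (Y i))
    (u : ∀ i, (∀ j, Y j) → ℝ)
    (hself : ∀ w : ∀ j, Y j, (∀ j, w j ∈ X j) → ∀ i, F i w ⊆ X i)
    (x : ∀ i, Y i) (hx : ∀ i, x i ∈ X i)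
    (y : ∀ i, Y i)
    (hproj : ∀ i, ‖y i - x i‖ = ⨅ w : X i, ‖y i - (w : Y i)‖)
    (hmax : ∀ i, y i ∈ F i x ∧
      ∀ z ∈ F i x, u i (Function.update x i z) ≤ u i (Function.update x i (y i))) :
    ∀ i, x i ∈ F i x ∧ ∀ z ∈ F i x, u i (Function.update x i z) ≤ u i x := by
  have hyx : ∀ i, y i = x i := by
    intro i
    have hyX : y i ∈ X i := hself x hx i (hmax i).1
    have hbdd : BddBelow (Set.range fun w : X i => ‖y i - (w : Y i)‖) :=
      ⟨0, by rintro _ ⟨w, rfl⟩; positivity⟩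
    have hle : (⨅ w : X i, ‖y i - (w : Y i)‖) ≤ ‖y i - y i‖ :=
      ciInf_le hbdd (⟨y i, hyX⟩ : X i)
    have : ‖y i - x i‖ ≤ 0 := by
      rw [hproj i]; simpa using hle
    have := le_antisymm this (norm_nonneg _)
    rw [norm_eq_zero, sub_eq_zero] at this
    exact this
  have hxy : x = y := funext fun i => (hyx i).symm
  intro i
  subst hxy
  refine ⟨(hmax i).1, fun z hz => ?_⟩
  have := (hmax i).2 z hz
  simpa [Function.update_eq_self] using this
end

section
/- Consider a two-player game on ℝ² with X = Y = {(x₁,x₂) ∈ [0,1]² : x₁ + x₂ ≥ 1}, constraint maps F₁(y) = {(2/‖y‖)•y + v : v ∈ [0,1]²} and F₂(x) = {(√2/‖x‖)•x + v : v ∈ [0,1]²} (Euclidean norm), and payoffs u₁(x,y) = 2x₁ + 2x₂ + 3y₂, u₂(x,y) = 2x₁ + y₁ + y₂. Then F₁(Y) ∩ X = ∅, so no classical generalized Nash equilibrium exists, but the point (x*, y*) = ((1,1),(1,1)) is a best approximate solution. -/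
open Set

noncomputable section

/-- The common strategy set `X = Y = {(x₁,x₂) ∈ [0,1]² : x₁ + x₂ ≥ 1}`. -/
def Xset : Set (EuclideanSpace ℝ (Fin 2)) :=
  {p | p 0 ∈ Icc (0:ℝ) 1 ∧ p 1 ∈ Icc (0:ℝ) 1 ∧ 1 ≤ p 0 + p 1}

/-- The unit box `[0,1]²`. -/
def box : Set (EuclideanSpace ℝ (Fin 2)) :=
  {v | v 0 ∈ Icc (0:ℝ) 1 ∧ v 1 ∈ Icc (0:ℝ) 1}

/-- Constraint map of the first player. -/
def F1 (y : EuclideanSpace ℝ (Fin 2)) : Set (EuclideanSpace ℝ (Fin 2)) :=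
  {z | ∃ v ∈ box, z = (2 / ‖y‖) • y + v}

/-- Constraint map of the second player. -/
def F2 (x : EuclideanSpace ℝ (Fin 2)) : Set (EuclideanSpace ℝ (Fin 2)) :=
  {z | ∃ v ∈ box, z = (Real.sqrt 2 / ‖x‖) • x + v}

/-- Payoff of the first player. -/
def u1 (x y : EuclideanSpace ℝ (Fin 2)) : ℝ := 2 * x 0 + 2 * x 1 + 3 * y 1

/-- Payoff of the second player. -/
def u2 (x y : EuclideanSpace ℝ (Fin 2)) : ℝ := 2 * x 0 + y 0 + y 1

/-- The point `(1,1)`. -/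
def xstar : EuclideanSpace ℝ (Fin 2) := (WithLp.equiv 2 (Fin 2 → ℝ)).symm ![1, 1]

lemma norm_eq2 (p : EuclideanSpace ℝ (Fin 2)) : ‖p‖ = Real.sqrt (p 0 ^ 2 + p 1 ^ 2) := by
  rw [EuclideanSpace.norm_eq, Fin.sum_univ_two]
  simp [sq_abs]

lemma norm_xstar : ‖xstar‖ = Real.sqrt 2 := by
  rw [norm_eq2]; norm_num [xstar]

lemma xstar_mem : xstar ∈ Xset := by
  refine ⟨⟨?_, ?_⟩, ⟨?_, ?_⟩, ?_⟩ <;> norm_num [xstar]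

lemma xstar_box : xstar ∈ box := ⟨⟨by norm_num [xstar], by norm_num [xstar]⟩, by norm_num [xstar], by norm_num [xstar]⟩

lemma key1 : ∀ y ∈ Xset, ∀ z ∈ F1 y, z ∉ Xset := by
  rintro y ⟨⟨hy00, hy01⟩, ⟨hy10, hy11⟩, hy⟩ z ⟨v, ⟨⟨hv00, hv01⟩, hv10, hv11⟩, rfl⟩
    ⟨⟨_, hz0⟩, ⟨_, hz1⟩, _⟩
  have hn : ‖y‖ = Real.sqrt (y 0 ^ 2 + y 1 ^ 2) := norm_eq2 y
  have hnn : (0:ℝ) ≤ y 0 ^ 2 + y 1 ^ 2 := by positivity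
  have hn2 : ‖y‖ ^ 2 = y 0 ^ 2 + y 1 ^ 2 := by rw [hn]; exact Real.sq_sqrt hnn
  have hnpos : 0 < ‖y‖ := by rw [hn]; apply Real.sqrt_pos.2; nlinarith [mul_nonneg hy00 hy10, sq_nonneg (y 0 + y 1 - 1)]
  have e0 : ((2 / ‖y‖) • y + v) 0 = 2 / ‖y‖ * y 0 + v 0 := by simp
  have e1 : ((2 / ‖y‖) • y + v) 1 = 2 / ‖y‖ * y 1 + v 1 := by simp
  rw [e0] at hz0
  rw [e1] at hz1
  have h0 : 2 * y 0 ≤ ‖y‖ := by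
    have : 2 / ‖y‖ * y 0 ≤ 1 := by linarith
    calc 2 * y 0 = (2 / ‖y‖ * y 0) * ‖y‖ := by field_simp
    _ ≤ 1 * ‖y‖ := by nlinarith
    _ = ‖y‖ := one_mul _
  have h1 : 2 * y 1 ≤ ‖y‖ := by
    have : 2 / ‖y‖ * y 1 ≤ 1 := by linarith
    calc 2 * y 1 = (2 / ‖y‖ * y 1) * ‖y‖ := by field_simp
    _ ≤ 1 * ‖y‖ := by nlinarith
    _ = ‖y‖ := one_mul _
  nlinarith [sq_nonneg (y 0 + y 1), mul_le_mul h0 h0 (by linarith) hnpos.le,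
    mul_le_mul h1 h1 (by linarith) hnpos.le]

/-- In the two-player game, `F₁(Y) ∩ X = ∅`, so no classical generalized Nash equilibrium
exists, but `((1,1),(1,1))` is a best approximate solution. -/
theorem stmt15 :
    ((⋃ y ∈ Xset, F1 y) ∩ Xset = ∅) ∧
    (¬ ∃ x ∈ Xset, ∃ y ∈ Xset,
      (x ∈ F1 y ∧ ∀ z ∈ F1 y, u1 z y ≤ u1 x y) ∧
      (y ∈ F2 x ∧ ∀ z ∈ F2 x, u2 x z ≤ u2 x y)) ∧
    (∃ xh yh : EuclideanSpace ℝ (Fin 2),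
      xh ∈ F1 xstar ∧ (∀ z ∈ F1 xstar, u1 z xstar ≤ u1 xh xstar) ∧
      ‖xh - xstar‖ = ⨅ w : Xset, ‖xh - (w : EuclideanSpace ℝ (Fin 2))‖ ∧
      yh ∈ F2 xstar ∧ (∀ z ∈ F2 xstar, u2 xstar z ≤ u2 xstar yh) ∧
      ‖yh - xstar‖ = ⨅ w : Xset, ‖yh - (w : EuclideanSpace ℝ (Fin 2))‖) := by
  have s2 : Real.sqrt 2 ^ 2 = 2 := Real.sq_sqrt (by norm_num)
  have s2nn : (0:ℝ) ≤ Real.sqrt 2 := Real.sqrt_nonneg 2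
  have s2pos : (0:ℝ) < Real.sqrt 2 := Real.sqrt_pos.2 (by norm_num)
  have hdiv : 2 / ‖xstar‖ = Real.sqrt 2 := by
    rw [norm_xstar, Real.div_sqrt]
  have hdiv2 : Real.sqrt 2 / ‖xstar‖ = 1 := by
    rw [norm_xstar, div_self (ne_of_gt s2pos)]
  haveI hne : Nonempty ↥Xset := ⟨⟨xstar, xstar_mem⟩⟩
  refine ⟨?_, ?_, ?_⟩
  · ext z
    simp only [mem_inter_iff, mem_iUnion, mem_empty_iff_false, iff_false, not_and]
    rintro ⟨y, hy, hz⟩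
    exact key1 y hy z hz
  · rintro ⟨x, hx, y, hy, ⟨hxF, _⟩, _⟩
    exact key1 y hy x hxF hx
  · set xh : EuclideanSpace ℝ (Fin 2) :=
      (WithLp.equiv 2 (Fin 2 → ℝ)).symm ![Real.sqrt 2 + 1, Real.sqrt 2 + 1] with hxh
    set yh : EuclideanSpace ℝ (Fin 2) :=
      (WithLp.equiv 2 (Fin 2 → ℝ)).symm ![2, 2] with hyh
    have hxstar0 : xstar 0 = 1 := rfl
    have hxstar1 : xstar 1 = 1 := rfl
    have hxh0 : xh 0 = Real.sqrt 2 + 1 := rfl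
    have hxh1 : xh 1 = Real.sqrt 2 + 1 := rfl
    have hyh0 : yh 0 = 2 := rfl
    have hyh1 : yh 1 = 2 := rfl
    have bdd : ∀ (p : EuclideanSpace ℝ (Fin 2)),
        BddBelow (range fun w : Xset => ‖p - (w : EuclideanSpace ℝ (Fin 2))‖) := by
      intro p
      exact ⟨0, by rintro _ ⟨w, rfl⟩; exact norm_nonneg _⟩
    refine ⟨xh, yh, ?_, ?_, ?_, ?_, ?_, ?_⟩
    · refine ⟨xstar, xstar_box, ?_⟩
      apply PiLp.ext
      intro i
      fin_cases i <;>
        simp [hdiv, hxstar0, hxstar1, hxh0, hxh1]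
    · rintro z ⟨v, ⟨⟨hv00, hv01⟩, hv10, hv11⟩, rfl⟩
      have e0 : ((2 / ‖xstar‖) • xstar + v) 0 = Real.sqrt 2 + v 0 := by
        simp [hdiv, hxstar0]
      have e1 : ((2 / ‖xstar‖) • xstar + v) 1 = Real.sqrt 2 + v 1 := by
        simp [hdiv, hxstar1]
      simp only [u1, e0, e1, hxh0, hxh1, hxstar1]
      linarith
    · apply le_antisymm
      · apply le_ciInf
        rintro ⟨w, ⟨⟨hw00, hw01⟩, ⟨hw10, hw11⟩, hw⟩⟩
        rw [norm_eq2, norm_eq2]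
        apply Real.sqrt_le_sqrt
        have d0 : (xh - xstar) 0 = Real.sqrt 2 := by
          simp [hxh0, hxstar0]
        have d1 : (xh - xstar) 1 = Real.sqrt 2 := by
          simp [hxh1, hxstar1]
        have e0 : (xh - w) 0 = Real.sqrt 2 + 1 - w 0 := by simp [hxh0]
        have e1 : (xh - w) 1 = Real.sqrt 2 + 1 - w 1 := by simp [hxh1]
        rw [d0, d1, e0, e1]
        nlinarith
      · exact ciInf_le (bdd xh) ⟨xstar, xstar_mem⟩
    · refine ⟨xstar, xstar_box, ?_⟩
      apply PiLp.ext
      intro i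
      fin_cases i <;>
        simp [hdiv2, hxstar0, hxstar1, hyh0, hyh1]
      all_goals norm_num
    · rintro z ⟨v, ⟨⟨hv00, hv01⟩, hv10, hv11⟩, rfl⟩
      have e0 : ((Real.sqrt 2 / ‖xstar‖) • xstar + v) 0 = 1 + v 0 := by
        simp [hdiv2, hxstar0]
      have e1 : ((Real.sqrt 2 / ‖xstar‖) • xstar + v) 1 = 1 + v 1 := by
        simp [hdiv2, hxstar1]
      simp only [u2, e0, e1, hyh0, hyh1, hxstar0]
      linarith
    · apply le_antisymm
      · apply le_ciInf
        rintro ⟨w, ⟨⟨hw00, hw01⟩, ⟨hw10, hw11⟩, hw⟩⟩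
        rw [norm_eq2, norm_eq2]
        apply Real.sqrt_le_sqrt
        have d0 : (yh - xstar) 0 = 1 := by norm_num [hyh0, hxstar0]
        have d1 : (yh - xstar) 1 = 1 := by norm_num [hyh1, hxstar1]
        have e0 : (yh - w) 0 = 2 - w 0 := by simp [hyh0]
        have e1 : (yh - w) 1 = 2 - w 1 := by simp [hyh1]
        rw [d0, d1, e0, e1]
        nlinarith
      · exact ciInf_le (bdd yh) ⟨xstar, xstar_mem⟩

end
end

section
/- The closed unit ball of an infinite-dimensional uniformly convex Banach space X is approximatively compact with respect to the norm, but is not compact. -/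
open Filter Topology Metric

/-!
In a uniformly convex space, a minimizing sequence for the distance `d` from `v` to a convex set
is Cauchy: if `u n` and `u N` were `ε` apart while both at distance `< d + η` from `v`, uniform
convexity would put their midpoint, which still lies in the set, at distance `< d` from `v`.
A closed convex set of a uniformly convex Banach space is therefore approximatively compact
(even without passing to a subsequence). The ball is not compact by Riesz's lemma.
-/

def ApproximativelyCompact {X : Type*} [SeminormedAddCommGroup X] (C : Set X) : Prop :=
  ∀ v : X, ∀ u : ℕ → X, (∀ n, u n ∈ C) →
    Tendsto (fun n => ‖v - u n‖) atTop (𝓝 (⨅ w : C, ‖v - (w : X)‖)) →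
    ∃ φ : ℕ → ℕ, StrictMono φ ∧ ∃ l ∈ C, Tendsto (u ∘ φ) atTop (𝓝 l)

section UniformConvex

variable {E : Type*} [NormedAddCommGroup E] [NormedSpace ℝ E]

theorem exists_forall_norm_le_dist_add_le_two_sub_mul [UniformConvexSpace E] {ε : ℝ}
    (hε : 0 < ε) :
    ∃ δ, 0 < δ ∧ ∀ ⦃r : ℝ⦄, 0 < r → ∀ ⦃x : E⦄, ‖x‖ ≤ r → ∀ ⦃y : E⦄, ‖y‖ ≤ r →
      ε * r ≤ ‖x - y‖ → ‖x + y‖ ≤ (2 - δ) * r := by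
  obtain ⟨δ, hδ, h⟩ := exists_forall_closed_ball_dist_add_le_two_sub E hε
  refine ⟨δ, hδ, fun r hr x hx y hy hxy => ?_⟩
  have hr' : 0 ≤ r⁻¹ := inv_nonneg.2 hr.le
  have hscale : ∀ z : E, ‖r⁻¹ • z‖ = ‖z‖ / r := fun z => by
    rw [norm_smul_of_nonneg hr', inv_mul_eq_div]
  have key := h (x := r⁻¹ • x) (y := r⁻¹ • y) (by rw [hscale, div_le_one hr]; exact hx)
    (by rw [hscale, div_le_one hr]; exact hy)
    (by rw [← smul_sub, hscale, le_div_iff₀ hr]; exact hxy)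
  rwa [← smul_add, hscale, div_le_iff₀ hr] at key

theorem two_mul_iInf_norm_sub_le {K : Set E} (hK : Convex ℝ K) (v : E) {x y : E}
    (hx : x ∈ K) (hy : y ∈ K) :
    2 * ⨅ w : K, ‖v - (w : E)‖ ≤ ‖(v - x) + (v - y)‖ := by
  have hmid : midpoint ℝ x y ∈ K := hK.midpoint_mem hx hy
  have hbdd : BddBelow (Set.range fun w : K => ‖v - (w : E)‖) :=
    ⟨0, Set.forall_mem_range.2 fun _ => norm_nonneg _⟩
  have hsum : (v - x) + (v - y) = (2 : ℝ) • (v - midpoint ℝ x y) := by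
    rw [midpoint_eq_smul_add, invOf_eq_inv]; module
  rw [hsum, norm_smul, Real.norm_ofNat]
  exact mul_le_mul_of_nonneg_left (ciInf_le hbdd ⟨_, hmid⟩) zero_le_two

theorem Convex.cauchySeq_of_tendsto_iInf_norm_sub [UniformConvexSpace E] {K : Set E}
    (hK : Convex ℝ K) {v : E} {u : ℕ → E} (hu : ∀ n, u n ∈ K)
    (htend : Tendsto (fun n => ‖v - u n‖) atTop (𝓝 (⨅ w : K, ‖v - (w : E)‖))) :
    CauchySeq u := by
  set d := ⨅ w : K, ‖v - (w : E)‖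
  obtain hd | hd : d = 0 ∨ 0 < d := (Real.iInf_nonneg fun _ => norm_nonneg _).eq_or_lt'
  · rw [hd] at htend
    refine (tendsto_iff_norm_sub_tendsto_zero (b := v)).2 ?_ |>.cauchySeq
    simpa only [norm_sub_rev] using htend
  rw [Metric.cauchySeq_iff']
  intro ε hε
  obtain ⟨δ, hδ, hconv⟩ :=
    exists_forall_norm_le_dist_add_le_two_sub_mul (E := E) (div_pos hε (mul_pos two_pos hd))
  set η := min d (δ * d / 2)
  have hη : 0 < η := lt_min hd (by positivity)
  obtain ⟨N, hN⟩ :=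
    (htend.eventually (gt_mem_nhds (lt_add_of_pos_right d hη))).exists_forall_of_atTop
  refine ⟨N, fun n hn => ?_⟩
  by_contra! hfar
  have hsep : ε / (2 * d) * (d + η) ≤ ‖(v - u n) - (v - u N)‖ := by
    rw [sub_sub_sub_cancel_left, norm_sub_rev, ← dist_eq_norm]
    calc ε / (2 * d) * (d + η) ≤ ε / (2 * d) * (2 * d) := by
          gcongr; linarith [min_le_left d (δ * d / 2)]
      _ = ε := div_mul_cancel₀ _ (by positivity)
      _ ≤ _ := hfar
  have hupper := hconv (by positivity) (hN n hn).le (hN N le_rfl).le hsep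
  have hlower := two_mul_iInf_norm_sub_le hK v (hu n) (hu N)
  nlinarith [min_le_right d (δ * d / 2), mul_pos hδ hη]

theorem Convex.approximativelyCompact [UniformConvexSpace E] [CompleteSpace E] {K : Set E}
    (hK : Convex ℝ K) (hKc : IsClosed K) : ApproximativelyCompact K := by
  intro v u hu htend
  obtain ⟨l, hl⟩ := cauchySeq_tendsto_of_complete (hK.cauchySeq_of_tendsto_iInf_norm_sub hu htend)
  exact ⟨id, strictMono_id, l, hKc.mem_of_tendsto hl (Eventually.of_forall hu), hl⟩

end UniformConvex

/-- The closed unit ball of an infinite-dimensional uniformly convex Banach space is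
approximatively compact with respect to the norm, but not compact. -/
theorem stmt16 {X : Type*} [NormedAddCommGroup X] [NormedSpace ℝ X]
    [UniformConvexSpace X] [CompleteSpace X]
    (hinf : ¬ FiniteDimensional ℝ X) :
    (∀ v : X, ∀ u : ℕ → X, (∀ n, u n ∈ closedBall (0:X) 1) →
      Tendsto (fun n => ‖v - u n‖) atTop
        (𝓝 (⨅ w : closedBall (0:X) 1, ‖v - (w : X)‖)) →
      ∃ φ : ℕ → ℕ, StrictMono φ ∧
        ∃ l ∈ closedBall (0:X) 1, Tendsto (u ∘ φ) atTop (𝓝 l)) ∧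
    ¬ IsCompact (closedBall (0:X) 1) :=
  ⟨(convex_closedBall 0 1).approximativelyCompact isClosed_closedBall,
    fun hcomp => hinf (FiniteDimensional.of_isCompact_closedBall ℝ one_pos hcomp)⟩
end
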